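/- arXiv:1605.02687 — 5 statements merged into one kernel-verified Lean document; each statement's English description precedes it below -/
import Mathlib

section
/- Let Z be a standard normal random variable. For every t ≥ 0, (1/√(2π)) · (1/(t+1)) · e^{-t²/2} ≤ Pr[Z ≥ t] ≤ (1/√π) · (1/(t+1)) · e^{-t²/2}. -/
/-!
With `F x = e^{-x²/2} / (x + 1)` one has `-F' x = (x² + x + 1) / (x + 1)² · e^{-x²/2}`, and for
`x ≥ 0` the rational factor lies in `[3/4, 1]`. Integrating `-F'` over `(t, ∞)` therefore traps
`∫_t^∞ e^{-x²/2} dx` between `F t` and `(4/3) F t`; dividing by `√(2π)` and using `4/3 ≤ √2`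
gives both bounds.
-/

open MeasureTheory ProbabilityTheory Real

open Set Filter Topology

noncomputable def tailEnvelope (x : ℝ) : ℝ := exp (-x ^ 2 / 2) / (x + 1)

theorem hasDerivAt_tailEnvelope {x : ℝ} (hx : x + 1 ≠ 0) :
    HasDerivAt tailEnvelope (-((x ^ 2 + x + 1) / (x + 1) ^ 2 * exp (-x ^ 2 / 2))) x := by
  have hquad : HasDerivAt (fun x : ℝ => -x ^ 2 / 2) (-x) x := by
    simpa using ((hasDerivAt_pow 2 x).neg.div_const 2).congr_deriv (by ring)
  exact (hquad.exp.div ((hasDerivAt_id' x).add_const 1) hx).congr_deriv (by field_simp; ring)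

theorem tendsto_tailEnvelope_atTop : Tendsto tailEnvelope atTop (𝓝 0) := by
  have hquad : Tendsto (fun x : ℝ => -x ^ 2 / 2) atTop atBot :=
    (tendsto_neg_atTop_atBot.comp ((tendsto_pow_atTop two_ne_zero).atTop_div_const
      (by norm_num : (0 : ℝ) < 2))).congr fun x => by simp [neg_div]
  exact (tendsto_exp_atBot.comp hquad).div_atTop (tendsto_atTop_add_const_right _ 1 tendsto_id)

theorem sq_add_self_add_one_pos (x : ℝ) : 0 < x ^ 2 + x + 1 := by
  nlinarith [sq_nonneg (x + 1 / 2)]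

theorem div_add_one_sq_le_one {x : ℝ} (hx : 0 ≤ x) : (x ^ 2 + x + 1) / (x + 1) ^ 2 ≤ 1 := by
  rw [div_le_one (by positivity)]
  nlinarith

theorem three_div_four_le_div_add_one_sq {x : ℝ} (hx : x + 1 ≠ 0) :
    3 / 4 ≤ (x ^ 2 + x + 1) / (x + 1) ^ 2 := by
  rw [le_div_iff₀ (by positivity)]
  nlinarith [sq_nonneg (x - 1)]

section TailIntegral

variable {t : ℝ}

theorem hasDerivAt_neg_tailEnvelope (ht : -1 < t) :
    ∀ x ∈ Ici t, HasDerivAt (fun x => -tailEnvelope x)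
      ((x ^ 2 + x + 1) / (x + 1) ^ 2 * exp (-x ^ 2 / 2)) x := fun x hx =>
  (hasDerivAt_tailEnvelope (by simp only [mem_Ici] at hx; linarith)).neg.congr_deriv (neg_neg _)

theorem div_add_one_sq_mul_exp_nonneg (x : ℝ) :
    0 ≤ (x ^ 2 + x + 1) / (x + 1) ^ 2 * exp (-x ^ 2 / 2) := by
  have := sq_add_self_add_one_pos x
  positivity

theorem integrableOn_Ioi_div_add_one_sq_mul_exp (ht : -1 < t) :
    IntegrableOn (fun x => (x ^ 2 + x + 1) / (x + 1) ^ 2 * exp (-x ^ 2 / 2)) (Ioi t) :=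
  integrableOn_Ioi_deriv_of_nonneg' (hasDerivAt_neg_tailEnvelope ht)
    (fun x _ => div_add_one_sq_mul_exp_nonneg x) tendsto_tailEnvelope_atTop.neg

theorem integral_Ioi_div_add_one_sq_mul_exp (ht : -1 < t) :
    ∫ x in Ioi t, (x ^ 2 + x + 1) / (x + 1) ^ 2 * exp (-x ^ 2 / 2) = tailEnvelope t := by
  rw [integral_Ioi_of_hasDerivAt_of_nonneg' (hasDerivAt_neg_tailEnvelope ht)
    (fun x _ => div_add_one_sq_mul_exp_nonneg x) tendsto_tailEnvelope_atTop.neg]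
  ring

theorem integrable_exp_neg_sq_div_two : Integrable fun x : ℝ => exp (-x ^ 2 / 2) := by
  simpa [neg_div, div_eq_inv_mul] using integrable_exp_neg_mul_sq (by norm_num : (0 : ℝ) < 1 / 2)

theorem tailEnvelope_le_integral_Ioi_exp (ht : 0 ≤ t) :
    tailEnvelope t ≤ ∫ x in Ioi t, exp (-x ^ 2 / 2) := by
  rw [← integral_Ioi_div_add_one_sq_mul_exp (by linarith)]
  refine setIntegral_mono_on (integrableOn_Ioi_div_add_one_sq_mul_exp (by linarith))
    integrable_exp_neg_sq_div_two.integrableOn measurableSet_Ioi fun x hx => ?_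
  exact mul_le_of_le_one_left (exp_pos _).le (div_add_one_sq_le_one (ht.trans (le_of_lt hx)))

theorem integral_Ioi_exp_le_tailEnvelope (ht : -1 < t) :
    ∫ x in Ioi t, exp (-x ^ 2 / 2) ≤ 4 / 3 * tailEnvelope t := by
  rw [← integral_Ioi_div_add_one_sq_mul_exp ht, ← integral_const_mul]
  refine setIntegral_mono_on integrable_exp_neg_sq_div_two.integrableOn
    ((integrableOn_Ioi_div_add_one_sq_mul_exp ht).const_mul _) measurableSet_Ioi fun x hx => ?_
  have hx : x + 1 ≠ 0 := by simp only [mem_Ioi] at hx; linarith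
  have := three_div_four_le_div_add_one_sq hx
  nlinarith [exp_pos (-x ^ 2 / 2)]

end TailIntegral

theorem gaussianReal_zero_one_Ici (t : ℝ) : gaussianReal 0 1 (Ici t) =
    ENNReal.ofReal ((√(2 * π))⁻¹ * ∫ x in Ioi t, exp (-x ^ 2 / 2)) := by
  rw [gaussianReal_apply_eq_integral 0 one_ne_zero, integral_Ici_eq_integral_Ioi,
    ← integral_const_mul]
  simp [gaussianPDFReal]

/-- Szarek–Werner bounds for the standard normal tail: for `t ≥ 0`,
`(1/√(2π))·(1/(t+1))·e^{-t²/2} ≤ Pr[Z ≥ t] ≤ (1/√π)·(1/(t+1))·e^{-t²/2}`. -/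
theorem gaussian_tail_bounds (t : ℝ) (ht : 0 ≤ t) :
    ENNReal.ofReal ((1 / Real.sqrt (2 * π)) * (1 / (t + 1)) * Real.exp (-t ^ 2 / 2))
        ≤ gaussianReal 0 1 (Set.Ici t) ∧
    gaussianReal 0 1 (Set.Ici t)
        ≤ ENNReal.ofReal ((1 / Real.sqrt π) * (1 / (t + 1)) * Real.exp (-t ^ 2 / 2)) := by
  have henv : (1 / (t + 1)) * exp (-t ^ 2 / 2) = tailEnvelope t := by
    rw [tailEnvelope]; ring
  have henv_nonneg : 0 ≤ tailEnvelope t := by rw [tailEnvelope]; positivity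
  have hconst : (√(2 * π))⁻¹ * (4 / 3) ≤ (√π)⁻¹ := by
    have hsqrt_two : 4 / 3 ≤ √2 := le_sqrt_of_sq_le (by norm_num)
    rw [sqrt_mul zero_le_two, mul_inv, mul_comm, ← mul_assoc]
    exact mul_le_of_le_one_left (by positivity)
      (by rw [← div_eq_mul_inv, div_le_one (by positivity)]; exact hsqrt_two)
  rw [gaussianReal_zero_one_Ici, mul_assoc, mul_assoc, henv, one_div, one_div]
  constructor
  · gcongr
    exact tailEnvelope_le_integral_Ioi_exp ht
  · refine ENNReal.ofReal_le_ofReal ?_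
    calc (√(2 * π))⁻¹ * ∫ x in Ioi t, exp (-x ^ 2 / 2)
        ≤ (√(2 * π))⁻¹ * (4 / 3 * tailEnvelope t) := by
          gcongr; exact integral_Ioi_exp_le_tailEnvelope (by linarith)
      _ ≤ (√π)⁻¹ * tailEnvelope t := by
          rw [← mul_assoc]; gcongr
end

section
/- Let Z1, Z2 be independent standard normal random variables and let D ⊂ ℝ² be a closed convex set not containing the origin, with Δ the Euclidean distance from the origin to D. Then Pr[(Z1,Z2) ∈ D] ≤ e^{-Δ²/2}. -/
/-!
The point `p` of `D` nearest to the origin has `‖p‖ = Δ`, and `D` lies in the half-plane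
`{z | ‖p‖² ≤ ⟪p, z⟫}` (Hilbert projection). The linear form `⟪p, Z⟫` is sub-Gaussian with
variance proxy `‖p‖²` under the standard Gaussian measure on `ℝ²`, so the Chernoff bound gives
`P(⟪p, Z⟫ ≥ ‖p‖²) ≤ exp (-‖p‖⁴ / (2‖p‖²)) = exp (-Δ² / 2)`.
-/

open MeasureTheory ProbabilityTheory Real
open scoped NNReal InnerProductSpace

namespace ProbabilityTheory.HasSubgaussianMGF

variable {Ω Ω' : Type*} {mΩ : MeasurableSpace Ω} {mΩ' : MeasurableSpace Ω'}
  {μ : Measure Ω} {ν : Measure Ω'} {X : Ω → ℝ} {Y : Ω' → ℝ} {cX cY : ℝ≥0}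

lemma comp_fst [IsProbabilityMeasure ν] (hX : HasSubgaussianMGF X cX μ) :
    HasSubgaussianMGF (fun z : Ω × Ω' ↦ X z.1) cX (μ.prod ν) :=
  .of_map measurable_fst.aemeasurable (by rwa [Measure.map_fst_prod, measure_univ, one_smul])

lemma comp_snd [IsProbabilityMeasure μ] [SFinite ν] (hY : HasSubgaussianMGF Y cY ν) :
    HasSubgaussianMGF (fun z : Ω × Ω' ↦ Y z.2) cY (μ.prod ν) :=
  .of_map measurable_snd.aemeasurable (by rwa [Measure.map_snd_prod, measure_univ, one_smul])

lemma prod_add [IsProbabilityMeasure μ] [IsProbabilityMeasure ν] (hX : HasSubgaussianMGF X cX μ)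
    (hY : HasSubgaussianMGF Y cY ν) :
    HasSubgaussianMGF (fun z : Ω × Ω' ↦ X z.1 + Y z.2) (cX + cY) (μ.prod ν) :=
  hX.comp_fst.add_of_indepFun hY.comp_snd (indepFun_prod₀ hX.aemeasurable hY.aemeasurable)

end ProbabilityTheory.HasSubgaussianMGF

lemma hasSubgaussianMGF_gaussianReal (v : ℝ≥0) :
    HasSubgaussianMGF (fun x ↦ x) v (gaussianReal 0 v) where
  integrable_exp_mul := integrable_exp_mul_gaussianReal
  mgf_le t := by simp [mgf_fun_id_gaussianReal]

lemma measureReal_halfPlane_gaussianReal_prod_le (v w : ℝ≥0) (a b : ℝ) {ε : ℝ} (hε : 0 ≤ ε) :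
    ((gaussianReal 0 v).prod (gaussianReal 0 w)).real {z | ε ≤ a * z.1 + b * z.2}
      ≤ exp (-ε ^ 2 / (2 * (a ^ 2 * v + b ^ 2 * w))) :=
  (((hasSubgaussianMGF_gaussianReal v).const_mul a).prod_add
    ((hasSubgaussianMGF_gaussianReal w).const_mul b)).measure_ge_le hε

lemma exists_mem_forall_norm_sq_le_inner {F : Type*} [NormedAddCommGroup F]
    [InnerProductSpace ℝ F] {K : Set F} (hne : K.Nonempty) (hK : IsComplete K)
    (hconv : Convex ℝ K) : ∃ v ∈ K, ∀ z ∈ K, ‖v‖ ^ 2 ≤ ⟪v, z⟫_ℝ := by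
  obtain ⟨v, hvK, hv⟩ := exists_norm_eq_iInf_of_complete_convex hne hK hconv 0
  refine ⟨v, hvK, fun z hz ↦ ?_⟩
  have h := (norm_eq_iInf_iff_real_inner_le_zero hconv hvK).mp hv z hz
  rw [zero_sub, inner_neg_left, inner_sub_right, real_inner_self_eq_norm_sq] at h
  linarith

lemma isLeast_norm_image_of_norm_sq_le_inner {F : Type*} [NormedAddCommGroup F]
    [InnerProductSpace ℝ F] {K : Set F} {v : F} (hv : v ∈ K)
    (h : ∀ z ∈ K, ‖v‖ ^ 2 ≤ ⟪v, z⟫_ℝ) : IsLeast ((‖·‖) '' K) ‖v‖ := by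
  refine ⟨⟨v, hv, rfl⟩, ?_⟩
  rintro _ ⟨z, hz, rfl⟩
  nlinarith [h z hz, real_inner_le_norm v z, norm_nonneg v, norm_nonneg z]

lemma WithLp.norm_toLp_prod_real (z : ℝ × ℝ) : ‖WithLp.toLp 2 z‖ = √(z.1 ^ 2 + z.2 ^ 2) := by
  simp [WithLp.prod_norm_eq_of_L2]

lemma WithLp.inner_toLp_prod_real (p z : ℝ × ℝ) :
    ⟪WithLp.toLp 2 p, WithLp.toLp 2 z⟫_ℝ = p.1 * z.1 + p.2 * z.2 := by
  simp [mul_comm]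

lemma exists_sqrt_eq_sInf_and_forall_le_dot {D : Set (ℝ × ℝ)} (hne : D.Nonempty)
    (hclosed : IsClosed D) (hconv : Convex ℝ D) :
    ∃ p : ℝ × ℝ, √(p.1 ^ 2 + p.2 ^ 2) = sInf ((fun z : ℝ × ℝ ↦ √(z.1 ^ 2 + z.2 ^ 2)) '' D)
      ∧ ∀ z ∈ D, p.1 ^ 2 + p.2 ^ 2 ≤ p.1 * z.1 + p.2 * z.2 := by
  let e := (WithLp.prodContinuousLinearEquiv 2 ℝ ℝ ℝ).symm
  have hK : IsClosed (WithLp.toLp 2 '' D) := e.toHomeomorph.isClosedMap D hclosed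
  obtain ⟨_, ⟨p, hpD, rfl⟩, hp⟩ := exists_mem_forall_norm_sq_le_inner (hne.image _)
    hK.isComplete (hconv.linear_image e.toLinearMap)
  refine ⟨p, ?_, fun z hz ↦ ?_⟩
  · have := (isLeast_norm_image_of_norm_sq_le_inner (Set.mem_image_of_mem _ hpD) hp).csInf_eq
    simpa only [Set.image_image, WithLp.norm_toLp_prod_real] using this.symm
  · have := hp _ ⟨z, hz, rfl⟩
    rwa [WithLp.norm_toLp_prod_real, WithLp.inner_toLp_prod_real, sq_sqrt (by positivity)] at this

theorem gaussian_convex_tail_general (D : Set (ℝ × ℝ)) (hclosed : IsClosed D)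
    (hconv : Convex ℝ D) (Δ : ℝ)
    (hΔ : Δ = sInf ((fun z : ℝ × ℝ => Real.sqrt (z.1 ^ 2 + z.2 ^ 2)) '' D)) :
    ((gaussianReal 0 1).prod (gaussianReal 0 1)) D
      ≤ ENNReal.ofReal (Real.exp (-Δ ^ 2 / 2)) := by
  obtain rfl | hne := D.eq_empty_or_nonempty
  · simp
  obtain ⟨p, hp, hdot⟩ := exists_sqrt_eq_sInf_and_forall_le_dot hne hclosed hconv
  have hΔp : Δ ^ 2 = p.1 ^ 2 + p.2 ^ 2 := by rw [hΔ, ← hp, sq_sqrt (by positivity)]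
  have hexp : -(Δ ^ 2) ^ 2 / (2 * (p.1 ^ 2 * (1 : ℝ≥0) + p.2 ^ 2 * (1 : ℝ≥0))) = -Δ ^ 2 / 2 := by
    rcases eq_or_ne Δ 0 with rfl | hΔ0
    · simp
    · rw [NNReal.coe_one, mul_one, mul_one, ← hΔp]
      field_simp
  calc _ ≤ ((gaussianReal 0 1).prod (gaussianReal 0 1)) {z | Δ ^ 2 ≤ p.1 * z.1 + p.2 * z.2} :=
        measure_mono fun z hz ↦ hΔp ▸ hdot z hz
    _ ≤ ENNReal.ofReal (exp (-Δ ^ 2 / 2)) := by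
        rw [← ofReal_measureReal, ← hexp]
        exact ENNReal.ofReal_le_ofReal
          (measureReal_halfPlane_gaussianReal_prod_le 1 1 p.1 p.2 (sq_nonneg Δ))

/-- Lu–Li bound (two-dimensional case): for independent standard normals `(Z1, Z2)`
and a closed convex set `D ⊂ ℝ²` not containing the origin, with `Δ` the Euclidean
distance from the origin to `D`, we have `Pr[(Z1,Z2) ∈ D] ≤ e^{-Δ²/2}`. -/
theorem gaussian_convex_tail (D : Set (ℝ × ℝ)) (hclosed : IsClosed D)
    (hconv : Convex ℝ D) (h0 : (0, 0) ∉ D) (Δ : ℝ)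
    (hΔ : Δ = sInf ((fun z : ℝ × ℝ => Real.sqrt (z.1 ^ 2 + z.2 ^ 2)) '' D)) :
    ((gaussianReal 0 1).prod (gaussianReal 0 1)) D
      ≤ ENNReal.ofReal (Real.exp (-Δ ^ 2 / 2)) :=
  gaussian_convex_tail_general D hclosed hconv Δ hΔ
end

section
/- Fix 0 < α < 1, −1 ≤ λ ≤ 1, t > 0, and −1 < β < α. Let Z1, Z2 be independent standard normal random variables, and for β' with −1 ≤ β' ≤ β set X = Z1 and Y = β'·Z1 + √(1−β'²)·Z2. Then Pr[X ≥ t ∧ Y ≥ α^λ · t] ≤ e^{-Δ²/2} where Δ² = (1 + (α^λ − β)²/(1−β²)) · t². -/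
/-! With `a = α ^ lam`, the event `{X ≥ t, Y ≥ a t}` lies in the half-plane
`u X + v Y ≥ u t + v a t` for any `u, v ≥ 0`. Under the product measure `u X + v Y` is a centred
Gaussian of variance `u² + 2 u v β' + v²`, so the Chernoff bound at parameter `1` gives
`exp ((u² + 2 u v β' + v²) / 2 - (u t + v a t))`. Taking for `(u, v)` the Lagrange multipliers
of the corner `(t, a t)` for correlation `β` gives `u² + 2 u v β + v² = u t + v a t = Δ²`,
and `β' ≤ β` only lowers the variance since `u v ≥ 0`. -/

open MeasureTheory ProbabilityTheory Real
open scoped NNReal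

lemma gaussianReal_real_Ici_le (μ : ℝ) (v : ℝ≥0) (r : ℝ) {s : ℝ} (hs : 0 ≤ s) :
    (gaussianReal μ v).real (Set.Ici r) ≤ exp (μ * s + v * s ^ 2 / 2 - s * r) := by
  have h := measure_ge_le_exp_mul_mgf (X := id) r hs
    (integrable_exp_mul_gaussianReal (μ := μ) (v := v) s)
  rw [mgf_id_gaussianReal, ← exp_add] at h
  exact h.trans_eq (by ring_nf)

lemma map_linear_prod_gaussianReal (m₁ m₂ c₁ c₂ : ℝ) (v₁ v₂ : ℝ≥0) :
    ((gaussianReal m₁ v₁).prod (gaussianReal m₂ v₂)).map (fun z ↦ c₁ * z.1 + c₂ * z.2)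
      = gaussianReal (c₁ * m₁ + c₂ * m₂)
          (.mk (c₁ ^ 2) (sq_nonneg _) * v₁ + .mk (c₂ ^ 2) (sq_nonneg _) * v₂) := by
  set P := (gaussianReal m₁ v₁).prod (gaussianReal m₂ v₂)
  have h₁ :
      P.map (fun z ↦ c₁ * z.1)
        = gaussianReal (c₁ * m₁) (.mk (c₁ ^ 2) (sq_nonneg _) * v₁) :=
    calc P.map (fun z ↦ c₁ * z.1) = (P.map Prod.fst).map (c₁ * ·) :=
          (Measure.map_map (measurable_const_mul c₁) measurable_fst).symm
      _ = _ := by simp [P, gaussianReal_map_const_mul]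
  have h₂ :
      P.map (fun z ↦ c₂ * z.2)
        = gaussianReal (c₂ * m₂) (.mk (c₂ ^ 2) (sq_nonneg _) * v₂) :=
    calc P.map (fun z ↦ c₂ * z.2) = (P.map Prod.snd).map (c₂ * ·) :=
          (Measure.map_map (measurable_const_mul c₂) measurable_snd).symm
      _ = _ := by simp [P, gaussianReal_map_const_mul]
  exact gaussianReal_add_gaussianReal_of_indepFun
    (indepFun_prod (measurable_const_mul c₁) (measurable_const_mul c₂)) h₁ h₂

lemma prod_gaussianReal_halfPlane_le (c₁ c₂ r : ℝ) :
    ((gaussianReal 0 1).prod (gaussianReal 0 1)) {z | r ≤ c₁ * z.1 + c₂ * z.2}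
      ≤ ENNReal.ofReal (exp ((c₁ ^ 2 + c₂ ^ 2) / 2 - r)) := by
  set P := (gaussianReal 0 1).prod (gaussianReal 0 1)
  set σ2 : ℝ≥0 := .mk (c₁ ^ 2 + c₂ ^ 2) (by positivity)
  have hL : Measurable fun z : ℝ × ℝ ↦ c₁ * z.1 + c₂ * z.2 := by fun_prop
  calc P {z | r ≤ c₁ * z.1 + c₂ * z.2}
        = (P.map fun z : ℝ × ℝ ↦ c₁ * z.1 + c₂ * z.2) (Set.Ici r) :=
        (Measure.map_apply hL measurableSet_Ici).symm
    _ = ENNReal.ofReal ((gaussianReal 0 σ2).real (Set.Ici r)) := by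
        rw [map_linear_prod_gaussianReal, ofReal_measureReal]
        congr 2
        · simp
        · ext; simp [σ2]
    _ ≤ _ := by
        gcongr
        simpa [σ2] using gaussianReal_real_Ici_le 0 σ2 r zero_le_one

lemma rpow_mem_Icc_self_inv {α lam : ℝ} (hα0 : 0 < α) (hα1 : α ≤ 1)
    (hlam : lam ∈ Set.Icc (-1 : ℝ) 1) : α ^ lam ∈ Set.Icc α α⁻¹ := by
  constructor
  · simpa using rpow_le_rpow_of_exponent_ge hα0 hα1 hlam.2
  · simpa [rpow_neg_one] using rpow_le_rpow_of_exponent_ge hα0 hα1 hlam.1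

lemma mul_le_one_of_le_of_le_inv {α β a : ℝ} (hα : 0 < α) (hβα : β ≤ α) (ha0 : 0 ≤ a)
    (ha : a ≤ α⁻¹) : β * a ≤ 1 := by
  rcases le_or_gt β 0 with hβ | hβ
  · nlinarith
  · calc β * a ≤ α * α⁻¹ := mul_le_mul hβα ha ha0 hα.le
      _ = 1 := mul_inv_cancel₀ hα.ne'

/-- Bivariate Gaussian tail upper bound: for standard normals `X = Z1` and
`Y = β'·Z1 + √(1-β'²)·Z2` with correlation `β' ≤ β < α`,
`Pr[X ≥ t ∧ Y ≥ α^λ·t] ≤ e^{-Δ²/2}` where `Δ² = (1 + (α^λ-β)²/(1-β²))·t²`. -/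
theorem bivariate_tail_upper (α lam t β β' : ℝ) (hα0 : 0 < α) (hα1 : α < 1)
    (hlam : lam ∈ Set.Icc (-1 : ℝ) 1) (ht : 0 < t) (hβ : -1 < β) (hβα : β < α)
    (hβ'lo : -1 ≤ β') (hβ'hi : β' ≤ β) :
    ((gaussianReal 0 1).prod (gaussianReal 0 1))
        {z : ℝ × ℝ | t ≤ z.1 ∧ α ^ lam * t ≤ β' * z.1 + Real.sqrt (1 - β' ^ 2) * z.2}
      ≤ ENNReal.ofReal
          (Real.exp (-((1 + (α ^ lam - β) ^ 2 / (1 - β ^ 2)) * t ^ 2) / 2)) := by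
  obtain ⟨hαa, haα⟩ := rpow_mem_Icc_self_inv hα0 hα1.le hlam
  set a := α ^ lam
  have hβa : β * a ≤ 1 := mul_le_one_of_le_of_le_inv hα0 hβα.le (hα0.le.trans hαa) haα
  have hden : 0 < 1 - β ^ 2 := by nlinarith
  -- `(u, v) = Σ⁻¹ (t, a t)` for the covariance matrix `Σ = !![1, β; β, 1]`
  set u := (1 - β * a) * t / (1 - β ^ 2)
  set v := (a - β) * t / (1 - β ^ 2)
  have hu : 0 ≤ u := div_nonneg (mul_nonneg (by linarith) ht.le) hden.le
  have hv : 0 ≤ v := div_nonneg (mul_nonneg (by linarith) ht.le) hden.le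
  set s := √(1 - β' ^ 2)
  have hsubset : {z : ℝ × ℝ | t ≤ z.1 ∧ a * t ≤ β' * z.1 + s * z.2}
      ⊆ {z | u * t + v * (a * t) ≤ (u + v * β') * z.1 + (v * s) * z.2} :=
    fun z ⟨h₁, h₂⟩ ↦ by
      have := mul_nonneg hu (sub_nonneg.2 h₁)
      have := mul_nonneg hv (sub_nonneg.2 h₂)
      rw [Set.mem_ofPred_eq]
      linarith
  calc _ ≤ _ := measure_mono hsubset
    _ ≤ _ := prod_gaussianReal_halfPlane_le _ _ _
    _ ≤ _ := by
      gcongr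
      have hvar : (u + v * β') ^ 2 + (v * s) ^ 2 = u ^ 2 + 2 * u * v * β' + v ^ 2 := by
        rw [mul_pow, sq_sqrt (by nlinarith)]; ring
      have hcross : u * v * β' ≤ u * v * β :=
        mul_le_mul_of_nonneg_left hβ'hi (mul_nonneg hu hv)
      have hquad : u ^ 2 + 2 * u * v * β + v ^ 2 = u * t + v * (a * t) := by
        simp only [u, v]; field_simp; ring
      have hΔ : u * t + v * (a * t) = (1 + (a - β) ^ 2 / (1 - β ^ 2)) * t ^ 2 := by
        simp only [u, v]; field_simp; ring
      linarith
end

section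
/- Let k : ℝ → [−1,1] be a real-valued characteristic function with associated probability density μ on ℝ (i.e., k(Δ) = ∫ μ(t) e^{iΔt} dt is real). Then for all x, y ∈ ℝ: k(x − y) = E_{a∼μ}[cos(a(x − y))] = 2·E_{a∼μ, b∼Unif[0,2π]}[cos(a·x + b)·cos(a·y + b)]. -/
open MeasureTheory

/-- For a real-valued characteristic function `k` of a distribution `μ` on `ℝ`,
`k(x-y) = E_{a∼μ}[cos(a(x-y))] = 2·E_{a∼μ, b∼Unif[0,2π]}[cos(ax+b)·cos(ay+b)]`. -/
theorem char_fn_cos_identity (k : ℝ → ℝ) (μ : Measure ℝ) [IsProbabilityMeasure μ]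
    (hk : ∀ Δ : ℝ, (k Δ : ℂ) = ∫ t, Complex.exp (Complex.I * (Δ : ℂ) * (t : ℂ)) ∂μ)
    (unif : Measure ℝ) [IsProbabilityMeasure unif]
    (hunif : unif =
      (ENNReal.ofReal (2 * Real.pi))⁻¹ • volume.restrict (Set.Icc 0 (2 * Real.pi)))
    (x y : ℝ) :
    k (x - y) = ∫ a, Real.cos (a * (x - y)) ∂μ ∧
    k (x - y) = 2 * ∫ p : ℝ × ℝ,
        Real.cos (p.1 * x + p.2) * Real.cos (p.1 * y + p.2) ∂(μ.prod unif) := by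
  have normcos : ∀ u : ℝ, ‖Real.cos u‖ ≤ 1 := fun u => by
    rw [Real.norm_eq_abs]; exact Real.abs_cos_le_one u
  -- integral of cos(c + 2b) over unif is 0
  have hzero : ∀ c : ℝ, ∫ b, Real.cos (c + 2 * b) ∂unif = 0 := by
    intro c
    rw [hunif, integral_smul_measure]
    have hIcc : ∫ b in Set.Icc 0 (2 * Real.pi), Real.cos (c + 2 * b) = 0 := by
      rw [integral_Icc_eq_integral_Ioc,
        ← intervalIntegral.integral_of_le (by positivity : (0:ℝ) ≤ 2 * Real.pi)]
      have : ∀ b : ℝ, Real.cos (c + 2 * b) = Real.cos (2 * b + c) := fun b => by rw [add_comm]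
      simp_rw [this]
      rw [intervalIntegral.integral_comp_mul_add Real.cos two_ne_zero c]
      have h : ∀ d : ℝ, Real.sin (d + Real.pi * 2) = Real.sin d := fun d => by
        rw [mul_comm]; exact Real.sin_add_two_pi d
      simp only [integral_cos, smul_eq_mul, mul_zero, zero_add]
      rw [show 2*(2*Real.pi)+c = (c + Real.pi*2) + Real.pi*2 from by ring, h, h]
      ring
    rw [hIcc, smul_zero]
  -- Part 1
  have h1 : k (x - y) = ∫ a, Real.cos (a * (x - y)) ∂μ := by
    have hint : Integrable (fun t : ℝ =>
        Complex.exp (Complex.I * ((x - y : ℝ) : ℂ) * (t : ℂ))) μ := by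
      refine (integrable_const (1:ℝ)).mono' ?_ ?_
      · exact (Complex.continuous_exp.comp
          ((continuous_const.mul Complex.continuous_ofReal))).aestronglyMeasurable
      · refine Filter.Eventually.of_forall fun t => ?_
        simp [Complex.norm_exp]
    have hre : k (x - y) = (∫ t, Complex.exp (Complex.I * ((x - y : ℝ) : ℂ) * (t : ℂ)) ∂μ).re := by
      rw [← hk (x - y)]; simp
    have hci := integral_re (𝕜 := ℂ) hint
    simp only [RCLike.re_to_complex] at hci
    rw [hre, ← hci]
    congr 1; ext t
    have hf : Complex.I * ((x - y : ℝ) : ℂ) * (t : ℂ) =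
        ((t * (x - y) : ℝ) : ℂ) * Complex.I := by push_cast; ring
    rw [hf, Complex.exp_ofReal_mul_I_re, mul_comm]
  refine ⟨h1, ?_⟩
  -- Part 2
  have hgint : Integrable (fun p : ℝ × ℝ =>
      Real.cos (p.1 * x + p.2) * Real.cos (p.1 * y + p.2)) (μ.prod unif) := by
    refine (integrable_const (1:ℝ)).mono' ?_ ?_
    · exact ((Real.continuous_cos.comp
          ((continuous_fst.mul continuous_const).add continuous_snd)).mul
        (Real.continuous_cos.comp
          ((continuous_fst.mul continuous_const).add continuous_snd))).aestronglyMeasurable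
    · refine Filter.Eventually.of_forall fun p => ?_
      rw [norm_mul]
      exact mul_le_one₀ (normcos _) (norm_nonneg _) (normcos _)
  rw [integral_prod _ hgint]
  have hinner : ∀ a : ℝ, (∫ b, Real.cos (a * x + b) * Real.cos (a * y + b) ∂unif)
      = Real.cos (a * (x - y)) / 2 := by
    intro a
    have key : ∀ b : ℝ, Real.cos (a * x + b) * Real.cos (a * y + b)
        = (Real.cos (a * (x - y)) + Real.cos ((a * x + a * y) + 2 * b)) / 2 := by
      intro b
      have e1 : Real.cos (a * (x - y)) = Real.cos (a * x + b) * Real.cos (a * y + b)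
          + Real.sin (a * x + b) * Real.sin (a * y + b) := by
        rw [show a * (x - y) = (a * x + b) - (a * y + b) from by ring, Real.cos_sub]
      have e2 : Real.cos ((a * x + a * y) + 2 * b) = Real.cos (a * x + b) * Real.cos (a * y + b)
          - Real.sin (a * x + b) * Real.sin (a * y + b) := by
        rw [show (a * x + a * y) + 2 * b = (a * x + b) + (a * y + b) from by ring, Real.cos_add]
      rw [e1, e2]; ring
    simp_rw [key]
    rw [integral_div, integral_add (integrable_const _) ?hc, hzero, integral_const]
    · simp
    · refine (integrable_const (1:ℝ)).mono' ?_ ?_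
      · exact (Real.continuous_cos.comp
          (continuous_const.add (continuous_const.mul continuous_id))).aestronglyMeasurable
      · exact Filter.Eventually.of_forall fun b => normcos _
  simp_rw [hinner]
  rw [integral_div, h1]
  ring
end

section
/- Let x, y ∈ ℝ^d, let μ be a probability distribution on ℝ^d with real characteristic function k(x−y) = E_{a∼μ}[cos(⟨a, x−y⟩)], and let l be a positive integer. Define v̂(x) ∈ ℝ^l by v̂(x)_j = √(2/l)·cos(⟨a_j, x⟩ + b_j) with a_j ∼ μ and b_j ∼ Unif[0,2π] independent across j. Then for any ε̂ > 0, Pr[|⟨v̂(x), v̂(y)⟩ − k(x−y)| ≥ ε̂] ≤ 2 e^{−l ε̂² / 8}. -/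
/-!
Each summand `2 cos(⟨a, x⟩ + b) cos(⟨a, y⟩ + b) = cos ⟨a, x - y⟩ + cos(⟨a, x + y⟩ + 2b)` lies in
`[-2, 2]`, and averaging over the uniform phase `b` kills the second term, so its mean is `k`.
Under the product measure the summands are i.i.d., so by Hoeffding's lemma the centred summands are
sub-Gaussian with parameter `4`, and the two one-sided Hoeffding bounds for their sum at level
`l ε` give `2 exp (-(l ε)² / (8 l))`.
-/

open Real MeasureTheory ProbabilityTheory
open scoped NNReal

namespace ProbabilityTheory

lemma HasSubgaussianMGF.measureReal_abs_sum_ge_le_of_iIndepFun {Ω ι : Type*}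
    [MeasurableSpace Ω] {μ : Measure Ω} {X : ι → Ω → ℝ} (h_indep : iIndepFun X μ)
    {c : ι → ℝ≥0} {s : Finset ι}
    (h_subG : ∀ i ∈ s, HasSubgaussianMGF (X i) (c i) μ) {ε : ℝ} (hε : 0 ≤ ε) :
    μ.real {ω | ε ≤ |∑ i ∈ s, X i ω|} ≤ 2 * exp (-ε ^ 2 / (2 * ∑ i ∈ s, c i)) := by
  have h_upper := HasSubgaussianMGF.measure_sum_ge_le_of_iIndepFun h_indep h_subG hε
  have h_lower := HasSubgaussianMGF.measure_sum_ge_le_of_iIndepFun (X := fun i ω ↦ -X i ω)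
    (h_indep.comp (fun _ ↦ Neg.neg) fun _ ↦ measurable_neg) (fun i hi ↦ (h_subG i hi).neg) hε
  simp only [Finset.sum_neg_distrib] at h_lower
  have := h_indep.isProbabilityMeasure
  calc μ.real {ω | ε ≤ |∑ i ∈ s, X i ω|}
      ≤ μ.real ({ω | ε ≤ ∑ i ∈ s, X i ω} ∪ {ω | ε ≤ -∑ i ∈ s, X i ω}) := by
        refine measureReal_mono fun ω hω ↦ ?_
        simp only [Set.mem_union, Set.mem_ofPred_eq] at hω ⊢
        exact le_abs.mp hω
    _ ≤ _ := measureReal_union_le _ _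
    _ ≤ _ := by linarith

lemma measureReal_abs_sum_sub_integral_ge_le_pi {α ι : Type*} [MeasurableSpace α] [Fintype ι]
    (ν : Measure α) [IsProbabilityMeasure ν] {f : α → ℝ} (hf : Measurable f) {a b : ℝ}
    (hab : ∀ p, f p ∈ Set.Icc a b) {ε : ℝ} (hε : 0 ≤ ε) :
    (Measure.pi fun _ : ι ↦ ν).real {ω | ε ≤ |∑ j, (f (ω j) - ν[f])|}
      ≤ 2 * exp (-ε ^ 2 / (2 * Fintype.card ι * ((b - a) / 2) ^ 2)) := by
  have h_subG : HasSubgaussianMGF (fun p ↦ f p - ν[f]) ((‖b - a‖₊ / 2) ^ 2) ν :=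
    hasSubgaussianMGF_of_mem_Icc hf.aemeasurable (ae_of_all _ hab)
  have h := HasSubgaussianMGF.measureReal_abs_sum_ge_le_of_iIndepFun (s := Finset.univ)
    (iIndepFun_pi (μ := fun _ : ι ↦ ν) (X := fun _ p ↦ f p - ν[f])
      fun _ ↦ (hf.sub_const _).aemeasurable)
    (fun j _ ↦ HasSubgaussianMGF.of_map (measurable_pi_apply j).aemeasurable
      (by rwa [(measurePreserving_eval (fun _ : ι ↦ ν) j).map_eq])) hε
  have h_card :
      ((∑ _ : ι, (‖b - a‖₊ / 2) ^ 2 : ℝ≥0) : ℝ) = Fintype.card ι * ((b - a) / 2) ^ 2 := by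
    simp [div_pow]
  rwa [h_card, ← mul_assoc] at h

end ProbabilityTheory

lemma integral_cos_add_two_mul_uniform (θ : ℝ) :
    ∫ b, cos (θ + 2 * b) ∂((ENNReal.ofReal (2 * π))⁻¹ • volume.restrict (Set.Icc 0 (2 * π)))
      = 0 := by
  rw [integral_smul_measure, integral_Icc_eq_integral_Ioc,
    ← intervalIntegral.integral_of_le two_pi_pos.le]
  simp_rw [add_comm θ]
  rw [intervalIntegral.integral_comp_mul_add cos two_ne_zero, integral_cos,
    show 2 * (2 * π) + θ = θ + 2 * π + 2 * π by ring, sin_add_two_pi, sin_add_two_pi]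
  simp

lemma integral_two_mul_cos_add_mul_cos_add_uniform {unif : Measure ℝ} [IsProbabilityMeasure unif]
    (hunif : unif = (ENNReal.ofReal (2 * π))⁻¹ • volume.restrict (Set.Icc 0 (2 * π)))
    (A B : ℝ) :
    ∫ b, 2 * cos (A + b) * cos (B + b) ∂unif = cos (A - B) := by
  have h_prod (b : ℝ) : 2 * cos (A + b) * cos (B + b) = cos (A - B) + cos (A + B + 2 * b) := by
    rw [two_mul_cos_mul_cos]
    congr 2 <;> ring
  have h_int : Integrable (fun b ↦ cos (A + B + 2 * b)) unif :=
    .of_bound (by fun_prop) 1 (ae_of_all _ fun _ ↦ by simpa using abs_cos_le_one _)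
  simp_rw [h_prod]
  rw [integral_add (integrable_const _) h_int, integral_const, probReal_univ, one_smul, hunif,
    integral_cos_add_two_mul_uniform, add_zero]

/-- The paper's `v̂(x)_j` is `√(2 / l) * randomFourierFeature x (a_j, b_j)`. -/
noncomputable def randomFourierFeature {ι : Type*} [Fintype ι] (x : ι → ℝ) (p : (ι → ℝ) × ℝ) :
    ℝ :=
  cos (∑ i, p.1 i * x i + p.2)

section RandomFourierFeature

variable {ι : Type*} [Fintype ι]

@[fun_prop]
lemma measurable_randomFourierFeature (x : ι → ℝ) : Measurable (randomFourierFeature x) := by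
  unfold randomFourierFeature
  fun_prop

lemma two_mul_randomFourierFeature_mul_mem_Icc (x y : ι → ℝ) (p : (ι → ℝ) × ℝ) :
    2 * randomFourierFeature x p * randomFourierFeature y p ∈ Set.Icc (-2) 2 := by
  rw [Set.mem_Icc, ← abs_le, abs_mul, abs_mul, abs_two]
  calc 2 * |randomFourierFeature x p| * |randomFourierFeature y p| ≤ 2 * 1 * 1 := by
        gcongr <;> exact abs_cos_le_one _
    _ = 2 := by ring

lemma integral_two_mul_randomFourierFeature_mul {unif : Measure ℝ} [IsProbabilityMeasure unif]
    (hunif : unif = (ENNReal.ofReal (2 * π))⁻¹ • volume.restrict (Set.Icc 0 (2 * π)))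
    (μ : Measure (ι → ℝ)) [IsProbabilityMeasure μ] (x y : ι → ℝ) :
    ∫ p, 2 * randomFourierFeature x p * randomFourierFeature y p ∂(μ.prod unif)
      = ∫ a, cos (∑ i, a i * (x i - y i)) ∂μ := by
  have h_int : Integrable (fun p ↦ 2 * randomFourierFeature x p * randomFourierFeature y p)
      (μ.prod unif) :=
    .of_mem_Icc (-2) 2 (by fun_prop) (ae_of_all _ (two_mul_randomFourierFeature_mul_mem_Icc x y))
  rw [integral_prod _ h_int]
  refine integral_congr_ae (ae_of_all _ fun a ↦ ?_)
  simp only [randomFourierFeature]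
  rw [integral_two_mul_cos_add_mul_cos_add_uniform hunif, ← Finset.sum_sub_distrib]
  simp_rw [mul_sub]

end RandomFourierFeature

lemma sum_sqrt_two_div_mul_sub {n : ℕ} (hn : 0 < n) (u v : Fin n → ℝ) (k : ℝ) :
    ∑ j, (√(2 / n) * u j) * (√(2 / n) * v j) - k = (∑ j, (2 * u j * v j - k)) / n := by
  have h_sqrt : √(2 / n) * √(2 / n) = 2 / n := mul_self_sqrt (by positivity)
  rw [eq_div_iff (by positivity), sub_mul, Finset.sum_mul, Finset.sum_sub_distrib,
    Finset.sum_const, Finset.card_univ, Fintype.card_fin, nsmul_eq_mul, mul_comm k]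
  congr 1
  refine Finset.sum_congr rfl fun j _ ↦ ?_
  rw [mul_mul_mul_comm, h_sqrt]
  field_simp

/-- Hoeffding bound for the approximate feature map of Rahimi–Recht: with
`v̂(x)_j = √(2/l)·cos(⟨a_j,x⟩+b_j)` for i.i.d. `a_j ∼ μ`, `b_j ∼ Unif[0,2π]`, and
`k = E_{a∼μ}[cos(⟨a,x-y⟩)]`, one has
`Pr[|⟨v̂(x),v̂(y)⟩ - k| ≥ ε̂] ≤ 2·e^{-lε̂²/8}`. -/
theorem feature_map_hoeffding (d l : ℕ) (hl : 0 < l) (x y : Fin d → ℝ)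
    (μ : Measure (Fin d → ℝ)) [IsProbabilityMeasure μ]
    (unif : Measure ℝ) [IsProbabilityMeasure unif]
    (hunif : unif =
      (ENNReal.ofReal (2 * Real.pi))⁻¹ • volume.restrict (Set.Icc 0 (2 * Real.pi)))
    (k : ℝ) (hk : k = ∫ a, Real.cos (∑ i, a i * (x i - y i)) ∂μ)
    (ε : ℝ) (hε : 0 < ε) :
    (Measure.pi fun _ : Fin l => μ.prod unif)
        {ω : Fin l → (Fin d → ℝ) × ℝ |
          ε ≤ |(∑ j, (Real.sqrt (2 / l) * Real.cos ((∑ i, (ω j).1 i * x i) + (ω j).2)) *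
                (Real.sqrt (2 / l) * Real.cos ((∑ i, (ω j).1 i * y i) + (ω j).2))) - k|}
      ≤ ENNReal.ofReal (2 * Real.exp (-(l : ℝ) * ε ^ 2 / 8)) := by
  set F : (Fin d → ℝ) × ℝ → ℝ := fun p ↦ 2 * randomFourierFeature x p * randomFourierFeature y p
  have hF_mean : (μ.prod unif)[F] = k :=
    (integral_two_mul_randomFourierFeature_mul hunif μ x y).trans hk.symm
  have hl_pos : (0 : ℝ) < l := by exact_mod_cast hl
  have h_hoeffding := measureReal_abs_sum_sub_integral_ge_le_pi (ι := Fin l) (μ.prod unif)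
    (by fun_prop) (two_mul_randomFourierFeature_mul_mem_Icc x y) (mul_nonneg hl_pos.le hε.le)
  calc _ = (Measure.pi fun _ : Fin l ↦ μ.prod unif)
        {ω | l * ε ≤ |∑ j, (F (ω j) - (μ.prod unif)[F])|} := by
        congr 1
        ext ω
        change ε ≤ |_| ↔ l * ε ≤ |_|
        rw [sum_sqrt_two_div_mul_sub hl, hF_mean, abs_div, Nat.abs_cast, le_div_iff₀ hl_pos,
          mul_comm]
        rfl
    _ ≤ _ := by
        refine (ENNReal.le_ofReal_iff_toReal_le (measure_ne_top _ _) (by positivity)).mpr ?_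
        refine h_hoeffding.trans_eq ?_
        rw [Fintype.card_fin]
        field_simp
        ring_nf
end
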